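/- (Uniform linear representation, first part) Let Σ₁, Σ₂ ∈ ℝ^{p×p} be symmetric with Λ(k; Σ₂) > 0, Γ₁, Γ₂ ∈ ℝ^p, and let k ≥ 1 be an integer such that RIP(k, Σ₁ − Σ₂) < Λ(k; Σ₂). Then for all models M ∈ 𝓜(k), ‖β_M(Σ₁, Γ₁) − β_M(Σ₂, Γ₂) − [Σ₂(M)]^{-1}(Γ₁(M) − Σ₁(M) β_M(Σ₂, Γ₂))‖₂ ≤ (RIP(k, Σ₁ − Σ₂)/Λ(k; Σ₂)) · ‖β_M(Σ₁, Γ₁) − β_M(Σ₂, Γ₂)‖₂. -/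

import Mathlib

open scoped BigOperators
open MeasureTheory ProbabilityTheory Real Matrix

noncomputable section

/-- The Euclidean (`ℓ₂`) norm of a finitely indexed real vector. -/
def norm2 {ι : Type*} [Fintype ι] (v : ι → ℝ) : ℝ := Real.sqrt (∑ i, (v i) ^ 2)

/-- The `ℓ₁` norm of a finitely indexed real vector. -/
def norm1 {ι : Type*} [Fintype ι] (v : ι → ℝ) : ℝ := ∑ i, |v i|

/-- The `ℓ₂ → ℓ₂` operator norm of a square real matrix. -/
def opNorm {ι : Type*} [Fintype ι] (A : Matrix ι ι ℝ) : ℝ :=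
  sSup {r | ∃ x : ι → ℝ, norm2 x ≤ 1 ∧ r = norm2 (A.mulVec x)}

/-- The collection of models: nonempty subsets of `{1, …, p}` of cardinality at most `k`. -/
def Models (p k : ℕ) : Set (Finset (Fin p)) := {M | 1 ≤ M.card ∧ M.card ≤ k}

/-- The subvector of `v` with indices in the model `M`. -/
def subv {p : ℕ} (v : Fin p → ℝ) (M : Finset (Fin p)) : {x // x ∈ M} → ℝ := fun i => v i.1

/-- The submatrix of `A` with row and column indices in the model `M`. -/
def subm {p : ℕ} (A : Matrix (Fin p) (Fin p) ℝ) (M : Finset (Fin p)) :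
    Matrix {x // x ∈ M} {x // x ∈ M} ℝ := fun i j => A i.1 j.1

/-- `RIP(k, A)`: the maximal `k`-sparse operator norm `sup_{M ∈ 𝓜(k)} ‖A(M)‖_op`. -/
def RIP {p : ℕ} (k : ℕ) (A : Matrix (Fin p) (Fin p) ℝ) : ℝ :=
  ⨆ M : Models p k, opNorm (subm A M.1)

/-- `𝒟(k, v) = sup_{M ∈ 𝓜(k)} ‖v(M)‖₂`. -/
def Dnorm {p : ℕ} (k : ℕ) (v : Fin p → ℝ) : ℝ :=
  ⨆ M : Models p k, norm2 (subv v M.1)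

/-- `θ` has at most `k` nonzero coordinates. -/
def sparse {p : ℕ} (k : ℕ) (θ : Fin p → ℝ) : Prop := Set.ncard {j | θ j ≠ 0} ≤ k

/-- The minimal `k`-sparse eigenvalue
`Λ(k; A) = inf{θᵀAθ/‖θ‖₂² : θ ≠ 0, θ k-sparse}`. -/
def Lam {p : ℕ} (k : ℕ) (A : Matrix (Fin p) (Fin p) ℝ) : ℝ :=
  sInf {r | ∃ θ : Fin p → ℝ, θ ≠ 0 ∧ sparse k θ ∧ r = θ ⬝ᵥ A.mulVec θ / norm2 θ ^ 2}

/-- The linear regression map `β_M(Σ, Γ) = (Σ(M))⁻¹ Γ(M)`. -/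
def betaM {p : ℕ} (M : Finset (Fin p)) (S : Matrix (Fin p) (Fin p) ℝ) (G : Fin p → ℝ) :
    {x // x ∈ M} → ℝ := (subm S M)⁻¹.mulVec (subv G M)

/-- `S_{2,k}(Σ, Γ) = sup_{M ∈ 𝓜(k)} ‖β_M(Σ, Γ)‖₂`. -/
def S2k {p : ℕ} (k : ℕ) (S : Matrix (Fin p) (Fin p) ℝ) (G : Fin p → ℝ) : ℝ :=
  ⨆ M : Models p k, norm2 (betaM M.1 S G)

/-- `S_{1,k}(Σ, Γ) = sup_{M ∈ 𝓜(k)} ‖β_M(Σ, Γ)‖₁`. -/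
def S1k {p : ℕ} (k : ℕ) (S : Matrix (Fin p) (Fin p) ℝ) (G : Fin p → ℝ) : ℝ :=
  ⨆ M : Models p k, norm1 (betaM M.1 S G)

/-- The `k`-sparse Euclidean unit ball `Θ_k ⊆ ℝ^p`. -/
def Theta (p k : ℕ) : Set (Fin p → ℝ) := {θ | sparse k θ ∧ norm2 θ ≤ 1}

/-- The elementwise maximum norm `|||A|||_∞` of a matrix. -/
def normInfMat {p : ℕ} (A : Matrix (Fin p) (Fin p) ℝ) : ℝ :=
  ⨆ q : Fin p × Fin p, |A q.1 q.2|

/-- The supremum norm `‖v‖_∞` of a vector. -/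
def normInfVec {p : ℕ} (v : Fin p → ℝ) : ℝ := ⨆ j, |v j|

/-!
On a model `M` with `|M| ≤ k`, extending vectors by zero turns `Λ(k; Σ₂)` into a lower bound
`Λ ‖y‖² ≤ yᵀ Σ₂(M) y`, while `|yᵀ (Σ₁(M) − Σ₂(M)) y| ≤ RIP ‖y‖²`; hence `Σ₁(M)` is coercive with
constant `Λ − RIP > 0`, in particular invertible, so `Σ₁(M) β_M(Σ₁, Γ₁) = Γ₁(M)`. Substituting this,
the remainder becomes `−Σ₂(M)⁻¹ (Σ₁(M) − Σ₂(M)) (β_M(Σ₁, Γ₁) − β_M(Σ₂, Γ₂))`, and the inverse of a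
matrix coercive with constant `Λ` has operator norm at most `1 / Λ`.
-/

section EuclideanNorm

open WithLp

variable {ι : Type*} [Fintype ι]

lemma norm2_eq_norm_toLp (v : ι → ℝ) : norm2 v = ‖(toLp 2 v : EuclideanSpace ℝ ι)‖ := by
  simp [norm2, EuclideanSpace.norm_eq]

lemma norm2_nonneg (v : ι → ℝ) : 0 ≤ norm2 v := Real.sqrt_nonneg _

lemma norm2_zero : norm2 (0 : ι → ℝ) = 0 := by simp [norm2]

lemma norm2_pos {v : ι → ℝ} (hv : v ≠ 0) : 0 < norm2 v := by
  rw [norm2_eq_norm_toLp]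
  exact norm_pos_iff.2 (by simpa using hv)

lemma norm2_neg (v : ι → ℝ) : norm2 (-v) = norm2 v := by simp [norm2]

lemma dotProduct_le_norm2_mul_norm2 (v w : ι → ℝ) : v ⬝ᵥ w ≤ norm2 v * norm2 w := by
  simpa [norm2_eq_norm_toLp, EuclideanSpace.inner_toLp_toLp, dotProduct_comm] using
    real_inner_le_norm (toLp 2 v : EuclideanSpace ℝ ι) (toLp 2 w)

lemma opNorm_eq_norm_toEuclideanCLM [DecidableEq ι] (A : Matrix ι ι ℝ) :
    opNorm A = ‖toEuclideanCLM (𝕜 := ℝ) A‖ := by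
  rw [← ContinuousLinearMap.sSup_unitClosedBall_eq_norm, opNorm]
  congr 1
  ext r
  simp only [norm2_eq_norm_toLp, Set.mem_ofPred_eq, Set.mem_image, Metric.mem_closedBall,
    dist_zero_right, eq_comm (a := r)]
  constructor
  · rintro ⟨x, hx, rfl⟩
    exact ⟨toLp 2 x, hx, by rw [toEuclideanCLM_toLp]⟩
  · rintro ⟨x, hx, rfl⟩
    exact ⟨ofLp x, hx, by rw [← toEuclideanCLM_toLp, toLp_ofLp]⟩

lemma norm2_mulVec_le (A : Matrix ι ι ℝ) (v : ι → ℝ) : norm2 (A *ᵥ v) ≤ opNorm A * norm2 v := by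
  classical
  simpa [norm2_eq_norm_toLp, opNorm_eq_norm_toEuclideanCLM] using
    (toEuclideanCLM (𝕜 := ℝ) A).le_opNorm (toLp 2 v)

end EuclideanNorm

section Coercive

variable {ι : Type*} [Fintype ι] {c : ℝ} {A : Matrix ι ι ℝ}

lemma mul_norm2_le_norm2_mulVec (hA : ∀ y, c * norm2 y ^ 2 ≤ y ⬝ᵥ A *ᵥ y) (y : ι → ℝ) :
    c * norm2 y ≤ norm2 (A *ᵥ y) := by
  rcases (norm2_nonneg y).eq_or_lt with hy | hy
  · rw [← hy, mul_zero]
    exact norm2_nonneg _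
  · have := (hA y).trans (dotProduct_le_norm2_mul_norm2 y (A *ᵥ y))
    nlinarith

lemma det_ne_zero_of_coercive [DecidableEq ι] (hc : 0 < c)
    (hA : ∀ y, c * norm2 y ^ 2 ≤ y ⬝ᵥ A *ᵥ y) : A.det ≠ 0 := by
  intro hdet
  obtain ⟨v, hv, hAv⟩ := exists_mulVec_eq_zero_iff.2 hdet
  have := mul_norm2_le_norm2_mulVec hA v
  rw [hAv, norm2_zero] at this
  exact this.not_gt (mul_pos hc (norm2_pos hv))

lemma norm2_inv_mulVec_le [DecidableEq ι] (hc : 0 < c)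
    (hA : ∀ y, c * norm2 y ^ 2 ≤ y ⬝ᵥ A *ᵥ y) (w : ι → ℝ) :
    norm2 (A⁻¹ *ᵥ w) ≤ norm2 w / c := by
  have hunit : IsUnit A.det := isUnit_iff_ne_zero.2 (det_ne_zero_of_coercive hc hA)
  rw [le_div_iff₀' hc]
  simpa [mulVec_mulVec, mul_nonsing_inv A hunit] using mul_norm2_le_norm2_mulVec hA (A⁻¹ *ᵥ w)

lemma abs_dotProduct_mulVec_le (A : Matrix ι ι ℝ) (y : ι → ℝ) :
    |y ⬝ᵥ A *ᵥ y| ≤ opNorm A * norm2 y ^ 2 := by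
  rw [abs_le]
  constructor
  · have := dotProduct_le_norm2_mul_norm2 (-y) (A *ᵥ y)
    have := norm2_mulVec_le A y
    rw [norm2_neg, neg_dotProduct] at *
    nlinarith [norm2_nonneg y]
  · have := dotProduct_le_norm2_mul_norm2 y (A *ᵥ y)
    have := norm2_mulVec_le A y
    nlinarith [norm2_nonneg y]

lemma coercive_of_opNorm_sub_le {B : Matrix ι ι ℝ} {r : ℝ}
    (hA : ∀ y, c * norm2 y ^ 2 ≤ y ⬝ᵥ A *ᵥ y) (hBA : opNorm (B - A) ≤ r) (y : ι → ℝ) :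
    (c - r) * norm2 y ^ 2 ≤ y ⬝ᵥ B *ᵥ y := by
  have hB : B = A + (B - A) := by abel
  have hpert := neg_le_of_abs_le (abs_dotProduct_mulVec_le (B - A) y)
  rw [hB, add_mulVec, dotProduct_add]
  nlinarith [hA y, sq_nonneg (norm2 y)]

end Coercive

lemma sub_sub_inv_mulVec_eq {ι α : Type*} [Fintype ι] [DecidableEq ι] [CommRing α]
    {A B : Matrix ι ι α} (hA : IsUnit A.det) (x y : ι → α) :
    x - y - A⁻¹ *ᵥ (B *ᵥ x - B *ᵥ y) = -(A⁻¹ *ᵥ ((B - A) *ᵥ (x - y))) := by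
  rw [sub_mulVec, ← mulVec_sub B, mulVec_sub A⁻¹, mulVec_mulVec _ A⁻¹ A, nonsing_inv_mul A hA,
    one_mulVec]
  abel

section ExtendByZero

open Function

variable {κ ι α : Type*} {e : κ → ι}

lemma extend_zero_apply_of_notMem_range [Zero α] (y : κ → α) {i : ι} (hi : i ∉ Set.range e) :
    extend e y 0 i = 0 :=
  extend_apply' _ _ _ (by simpa using hi)

lemma extend_zero_ne_zero [Zero α] (he : Injective e) {y : κ → α} (hy : y ≠ 0) :
    extend e y 0 ≠ 0 := by
  obtain ⟨a, ha⟩ := Function.ne_iff.1 hy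
  exact Function.ne_iff.2 ⟨e a, by simpa [he.extend_apply] using ha⟩

variable [Fintype κ] [Fintype ι]

lemma sum_eq_sum_comp_of_injective [AddCommMonoid α] (he : Injective e) (g : ι → α)
    (hg : ∀ i ∉ Set.range e, g i = 0) : ∑ i, g i = ∑ a, g (e a) :=
  (Fintype.sum_of_injective e he _ g hg fun _ => rfl).symm

lemma norm2_extend_zero (he : Injective e) (y : κ → ℝ) : norm2 (extend e y 0) = norm2 y := by
  unfold norm2
  rw [sum_eq_sum_comp_of_injective he _ fun i hi => by
    rw [extend_zero_apply_of_notMem_range y hi, sq, mul_zero]]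
  simp only [he.extend_apply]

lemma dotProduct_mulVec_extend_zero [NonUnitalNonAssocSemiring α] (he : Injective e)
    (A : Matrix ι ι α) (y : κ → α) :
    extend e y 0 ⬝ᵥ A *ᵥ extend e y 0 = y ⬝ᵥ A.submatrix e e *ᵥ y := by
  simp only [dotProduct, mulVec]
  rw [sum_eq_sum_comp_of_injective he _ fun i hi => by
    rw [extend_zero_apply_of_notMem_range y hi, zero_mul]]
  refine Finset.sum_congr rfl fun a _ => ?_
  rw [sum_eq_sum_comp_of_injective he _ fun i hi => by
    rw [extend_zero_apply_of_notMem_range y hi, mul_zero]]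
  simp only [he.extend_apply, submatrix_apply]

lemma sparse_extend_zero {p k : ℕ} {e : κ → Fin p} (he : Injective e)
    (hκ : Fintype.card κ ≤ k) (y : κ → ℝ) : sparse k (extend e y 0) := by
  have hsupp : {j | extend e y 0 j ≠ 0} ⊆ Set.range e := fun j hj => by
    by_contra hj'
    exact hj (extend_zero_apply_of_notMem_range y hj')
  calc Set.ncard {j | extend e y 0 j ≠ 0} ≤ (Set.range e).ncard := Set.ncard_le_ncard hsupp
    _ = Fintype.card κ := by rw [Set.ncard_range_of_injective he, Nat.card_eq_fintype_card]
    _ ≤ k := hκ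

end ExtendByZero

section SparseSubmatrices

variable {p k : ℕ}

lemma Lam_mul_norm2_sq_le (A : Matrix (Fin p) (Fin p) ℝ) {θ : Fin p → ℝ} (hθ : θ ≠ 0)
    (hs : sparse k θ) : Lam k A * norm2 θ ^ 2 ≤ θ ⬝ᵥ A *ᵥ θ := by
  have hθ2 : 0 < norm2 θ ^ 2 := pow_pos (norm2_pos hθ) 2
  have hbdd : BddBelow {r | ∃ θ : Fin p → ℝ, θ ≠ 0 ∧ sparse k θ ∧
      r = θ ⬝ᵥ A *ᵥ θ / norm2 θ ^ 2} := by
    refine ⟨-opNorm A, ?_⟩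
    rintro r ⟨φ, hφ, -, rfl⟩
    rw [le_div_iff₀ (pow_pos (norm2_pos hφ) 2), neg_mul]
    exact neg_le_of_abs_le (abs_dotProduct_mulVec_le A φ)
  rw [← le_div_iff₀ hθ2]
  exact csInf_le hbdd ⟨θ, hθ, hs, rfl⟩

lemma Lam_mul_norm2_sq_le_subm (A : Matrix (Fin p) (Fin p) ℝ) {M : Finset (Fin p)}
    (hM : M.card ≤ k) (y : {x // x ∈ M} → ℝ) :
    Lam k A * norm2 y ^ 2 ≤ y ⬝ᵥ subm A M *ᵥ y := by
  rcases eq_or_ne y 0 with rfl | hy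
  · simp [norm2_zero]
  have he : Function.Injective (Subtype.val : {x // x ∈ M} → Fin p) := Subtype.val_injective
  rw [← norm2_extend_zero he, show subm A M = A.submatrix Subtype.val Subtype.val from rfl,
    ← dotProduct_mulVec_extend_zero he]
  exact Lam_mul_norm2_sq_le A (extend_zero_ne_zero he hy)
    (sparse_extend_zero he (by simpa using hM) y)

lemma opNorm_subm_le_RIP (A : Matrix (Fin p) (Fin p) ℝ) {M : Finset (Fin p)}
    (hM : M ∈ Models p k) : opNorm (subm A M) ≤ RIP k A :=
  le_ciSup (f := fun N : Models p k => opNorm (subm A N.1)) (Set.finite_range _).bddAbove ⟨M, hM⟩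

lemma subm_sub (A B : Matrix (Fin p) (Fin p) ℝ) (M : Finset (Fin p)) :
    subm (A - B) M = subm A M - subm B M := rfl

lemma mulVec_betaM {M : Finset (Fin p)} {S : Matrix (Fin p) (Fin p) ℝ} (hS : (subm S M).det ≠ 0)
    (G : Fin p → ℝ) : subm S M *ᵥ betaM M S G = subv G M := by
  rw [betaM, mulVec_mulVec, mul_nonsing_inv _ (isUnit_iff_ne_zero.2 hS), one_mulVec]

end SparseSubmatrices

theorem stmt6_general {p : ℕ} (k : ℕ)
    (Sig1 Sig2 : Matrix (Fin p) (Fin p) ℝ)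
    (G1 G2 : Fin p → ℝ)
    (hLam : 0 < Lam k Sig2)
    (hRIP : RIP k (Sig1 - Sig2) < Lam k Sig2) :
    ∀ M ∈ Models p k,
      norm2 (betaM M Sig1 G1 - betaM M Sig2 G2
          - (subm Sig2 M)⁻¹.mulVec
              (subv G1 M - (subm Sig1 M).mulVec (betaM M Sig2 G2))) ≤
        (RIP k (Sig1 - Sig2) / Lam k Sig2) *
          norm2 (betaM M Sig1 G1 - betaM M Sig2 G2) := by
  intro M hM
  set R := RIP k (Sig1 - Sig2)
  set d := betaM M Sig1 G1 - betaM M Sig2 G2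
  have hcoer2 := Lam_mul_norm2_sq_le_subm Sig2 hM.2
  have hR : opNorm (subm Sig1 M - subm Sig2 M) ≤ R := by
    rw [← subm_sub]
    exact opNorm_subm_le_RIP (Sig1 - Sig2) hM
  have hcoer1 := coercive_of_opNorm_sub_le hcoer2 hR
  rw [← mulVec_betaM (det_ne_zero_of_coercive (sub_pos.2 hRIP) hcoer1) G1,
    sub_sub_inv_mulVec_eq (isUnit_iff_ne_zero.2 (det_ne_zero_of_coercive hLam hcoer2)), norm2_neg]
  calc norm2 ((subm Sig2 M)⁻¹ *ᵥ ((subm Sig1 M - subm Sig2 M) *ᵥ d))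
      ≤ norm2 ((subm Sig1 M - subm Sig2 M) *ᵥ d) / Lam k Sig2 :=
        norm2_inv_mulVec_le hLam hcoer2 _
    _ ≤ R * norm2 d / Lam k Sig2 := by
        gcongr
        exact (norm2_mulVec_le _ d).trans (by gcongr; exact norm2_nonneg d)
    _ = R / Lam k Sig2 * norm2 d := by ring

/-- Uniform linear representation, first part: if
`RIP(k, Σ₁ − Σ₂) < Λ(k; Σ₂)` then for all `M ∈ 𝓜(k)`,
`‖β_M(Σ₁,Γ₁) − β_M(Σ₂,Γ₂) − (Σ₂(M))⁻¹(Γ₁(M) − Σ₁(M)β_M(Σ₂,Γ₂))‖₂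
  ≤ (RIP(k, Σ₁ − Σ₂)/Λ(k; Σ₂)) ‖β_M(Σ₁,Γ₁) − β_M(Σ₂,Γ₂)‖₂`. -/
theorem stmt6 {p : ℕ} (k : ℕ) (hk : 1 ≤ k)
    (Sig1 Sig2 : Matrix (Fin p) (Fin p) ℝ) (hS1 : Sig1.IsSymm) (hS2 : Sig2.IsSymm)
    (G1 G2 : Fin p → ℝ)
    (hLam : 0 < Lam k Sig2)
    (hRIP : RIP k (Sig1 - Sig2) < Lam k Sig2) :
    ∀ M ∈ Models p k,
      norm2 (betaM M Sig1 G1 - betaM M Sig2 G2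
          - (subm Sig2 M)⁻¹.mulVec
              (subv G1 M - (subm Sig1 M).mulVec (betaM M Sig2 G2))) ≤
        (RIP k (Sig1 - Sig2) / Lam k Sig2) *
          norm2 (betaM M Sig1 G1 - betaM M Sig2 G2) :=
  stmt6_general k Sig1 Sig2 G1 G2 hLam hRIP
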